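/- arXiv:2012.04854 — 5 statements merged into one kernel-verified Lean document; each statement's English description precedes it below -/
import Mathlib

section
/- In a symmetric all-pay auction with I bidders whose valuations are i.i.d. with CDF F on [v_low, v_high], with rewards M_1 ≥ M_2 ≥ ... ≥ M_I ≥ 0 and quadratic bidding cost c(z) = θκa z², the symmetric equilibrium bid satisfies c(β(v)) = Σ_{k=1}^{I-1} (M_k − M_{k+1}) ∫_{v_low}^{v} t f_{k:I-1}(t) dt, i.e., β(v) = sqrt( (1/(θκa)) Σ_{k=1}^{I-1} (M_k − M_{k+1}) ∫_{v_low}^{v} t f_{k:I-1}(t) dt ), where f_{k:I-1} is the density of the k-th highest among I−1 i.i.d. draws from F. Verify this solves the first-order condition v Σ_{k=1}^{I} (f_{k:I-1}(v) − f_{k-1:I-1}(v)) M_k = c'(β(v)) β'(v) with boundary condition β(v_low)=0. -/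
/-!
Write `S v = Σ_{k=1}^{I-1} (M_k - M_{k+1}) ∫_{v_low}^v t f_k(t) dt`. Since the `M_k` decrease
and the integrands are nonnegative, `S ≥ 0`, so squaring the square root gives `c (β v) = S v`
back. By the fundamental theorem of calculus `S' v = Σ_{k=1}^{I-1} (M_k - M_{k+1}) v f_k(v)`,
and summation by parts, using `f_0 = f_I = 0`, turns this into
`v Σ_{k=1}^{I} (f_k(v) - f_{k-1}(v)) M_k`.
-/

open MeasureTheory intervalIntegral

theorem Finset.sum_Icc_sub_mul_eq_sum_Icc_mul_sub (g M : ℕ → ℝ) {n : ℕ} (hn : 1 ≤ n) :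
    ∑ k ∈ Finset.Icc 1 n, (g k - g (k - 1)) * M k
      = g n * M n - g 0 * M 1 + ∑ k ∈ Finset.Icc 1 (n - 1), (M k - M (k + 1)) * g k := by
  induction n, hn using Nat.le_induction with
  | base => simp; ring
  | succ n hn ih =>
    obtain ⟨m, rfl⟩ : ∃ m, n = m + 1 := ⟨n - 1, by omega⟩
    rw [Finset.sum_Icc_succ_top (by omega), ih, Nat.add_sub_cancel, Nat.add_sub_cancel,
      Finset.sum_Icc_succ_top (by omega : 1 ≤ m + 1)]
    ring

theorem Finset.sum_Icc_sub_mul_of_vanishing_ends (g M : ℕ → ℝ) {n : ℕ} (hn : 1 ≤ n)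
    (hg0 : g 0 = 0) (hgn : g n = 0) :
    ∑ k ∈ Finset.Icc 1 n, (g k - g (k - 1)) * M k
      = ∑ k ∈ Finset.Icc 1 (n - 1), (M k - M (k + 1)) * g k := by
  simp [Finset.sum_Icc_sub_mul_eq_sum_Icc_mul_sub g M hn, hg0, hgn]

section AllPay

variable (I : ℕ) (M : ℕ → ℝ) (f : ℕ → ℝ → ℝ) (vlow : ℝ)

noncomputable def equilibriumCost (v : ℝ) : ℝ :=
  ∑ k ∈ Finset.Icc 1 (I - 1), (M k - M (k + 1)) * ∫ t in vlow..v, t * f k t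

variable {I M f vlow}

theorem equilibriumCost_nonneg (hvl : 0 ≤ vlow)
    (hM : ∀ k ∈ Finset.Icc 1 (I - 1), M (k + 1) ≤ M k)
    {s : Set ℝ} (hfnn : ∀ k ∈ Finset.Icc 1 (I - 1), ∀ t ∈ s, 0 ≤ f k t)
    {v : ℝ} (hv : Set.Icc vlow v ⊆ s) (hlv : vlow ≤ v) :
    0 ≤ equilibriumCost I M f vlow v := by
  refine Finset.sum_nonneg fun k hk => mul_nonneg (sub_nonneg.mpr (hM k hk)) ?_
  exact integral_nonneg hlv fun t ht => mul_nonneg (hvl.trans ht.1) (hfnn k hk t (hv ht))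

theorem hasDerivAt_equilibriumCost {vhigh v : ℝ}
    (hfc : ∀ k ∈ Finset.Icc 1 (I - 1), ContinuousOn (f k) (Set.Icc vlow vhigh))
    (hv : v ∈ Set.Ioo vlow vhigh) :
    HasDerivAt (equilibriumCost I M f vlow)
      (∑ k ∈ Finset.Icc 1 (I - 1), (M k - M (k + 1)) * (v * f k v)) v := by
  refine HasDerivAt.fun_sum fun k hk => HasDerivAt.const_mul _ ?_
  have hgc : ContinuousOn (fun t => t * f k t) (Set.Icc vlow vhigh) :=
    continuousOn_id.mul (hfc k hk)
  have hsub : Set.uIcc vlow v ⊆ Set.Icc vlow vhigh :=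
    Set.uIcc_subset_Icc (Set.left_mem_Icc.2 (hv.1.trans hv.2).le) (Set.Ioo_subset_Icc_self hv)
  exact integral_hasDerivAt_right (hgc.mono hsub).intervalIntegrable
    ((hgc.mono Set.Ioo_subset_Icc_self).stronglyMeasurableAtFilter isOpen_Ioo v hv)
    (hgc.continuousAt (Icc_mem_nhds hv.1 hv.2))

end AllPay

theorem stmt0_general (I : ℕ) (hI : 2 ≤ I) (θ κ a : ℝ) (hθ : 0 < θ) (hκ : 0 < κ) (ha : 0 < a)
    (vlow vhigh : ℝ) (hvl : 0 ≤ vlow)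
    (M : ℕ → ℝ) (hM : ∀ k ∈ Finset.Icc 1 (I - 1), M (k + 1) ≤ M k)
    (f : ℕ → ℝ → ℝ) (hf0 : ∀ t, f 0 t = 0) (hfI : ∀ t, f I t = 0)
    (hfc : ∀ k ∈ Finset.Icc 1 (I - 1), ContinuousOn (f k) (Set.Icc vlow vhigh))
    (hfnn : ∀ k ∈ Finset.Icc 1 (I - 1), ∀ t ∈ Set.Icc vlow vhigh, 0 ≤ f k t)
    (c β : ℝ → ℝ)
    (hc : ∀ z, c z = θ * κ * a * z ^ 2)
    (hβ : ∀ v, β v = Real.sqrt ((1 / (θ * κ * a)) *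
      ∑ k ∈ Finset.Icc 1 (I - 1), (M k - M (k + 1)) * ∫ t in vlow..v, t * f k t)) :
    (∀ v ∈ Set.Icc vlow vhigh,
        c (β v) = ∑ k ∈ Finset.Icc 1 (I - 1), (M k - M (k + 1)) * ∫ t in vlow..v, t * f k t)
    ∧ β vlow = 0
    ∧ (∀ v ∈ Set.Ioo vlow vhigh,
        HasDerivAt (fun w => c (β w))
          (v * ∑ k ∈ Finset.Icc 1 I, (f k v - f (k - 1) v) * M k) v) := by
  have hC : 0 < θ * κ * a := by positivity
  have hcost : ∀ v ∈ Set.Icc vlow vhigh, c (β v) = equilibriumCost I M f vlow v := by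
    intro v hv
    have hS := equilibriumCost_nonneg hvl hM hfnn (Set.Icc_subset_Icc_right hv.2) hv.1
    have hβv : β v = Real.sqrt (1 / (θ * κ * a) * equilibriumCost I M f vlow v) := hβ v
    rw [hc, hβv, Real.sq_sqrt (mul_nonneg (by positivity) hS)]
    field_simp
  refine ⟨hcost, by simp [hβ], fun v hv => ?_⟩
  have hFOC : ∑ k ∈ Finset.Icc 1 (I - 1), (M k - M (k + 1)) * (v * f k v)
      = v * ∑ k ∈ Finset.Icc 1 I, (f k v - f (k - 1) v) * M k := by
    rw [Finset.sum_Icc_sub_mul_of_vanishing_ends (f · v) M (by omega) (hf0 v) (hfI v),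
      Finset.mul_sum]
    exact Finset.sum_congr rfl fun k _ => by ring
  rw [← hFOC]
  refine (hasDerivAt_equilibriumCost hfc hv).congr_of_eventuallyEq ?_
  filter_upwards [Ioo_mem_nhds hv.1 hv.2] with w hw
  exact hcost w (Set.Ioo_subset_Icc_self hw)

/-- Symmetric equilibrium of the all-pay auction with quadratic cost `c z = θκa z²`:
the bid `β v = sqrt((1/(θκa)) Σ_{k=1}^{I-1}(M_k - M_{k+1}) ∫_{vlow}^v t f_{k:I-1}(t) dt)`
satisfies `c (β v) = Σ_{k=1}^{I-1}(M_k - M_{k+1}) ∫_{vlow}^v t f_k`, the boundary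
condition `β vlow = 0`, and the first-order condition
`d/dv c(β v) = v Σ_{k=1}^{I}(f_{k:I-1}(v) - f_{k-1:I-1}(v)) M_k`. -/
theorem stmt0 (I : ℕ) (hI : 2 ≤ I) (θ κ a : ℝ) (hθ : 0 < θ) (hκ : 0 < κ) (ha : 0 < a)
    (vlow vhigh : ℝ) (hv : vlow < vhigh) (hvl : 0 ≤ vlow)
    (M : ℕ → ℝ) (hM : ∀ k ∈ Finset.Icc 1 (I - 1), M (k + 1) ≤ M k) (hMI : 0 ≤ M I)
    (f : ℕ → ℝ → ℝ) (hf0 : ∀ t, f 0 t = 0) (hfI : ∀ t, f I t = 0)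
    (hfc : ∀ k ∈ Finset.Icc 1 (I - 1), ContinuousOn (f k) (Set.Icc vlow vhigh))
    (hfnn : ∀ k ∈ Finset.Icc 1 (I - 1), ∀ t ∈ Set.Icc vlow vhigh, 0 ≤ f k t)
    (c β : ℝ → ℝ)
    (hc : ∀ z, c z = θ * κ * a * z ^ 2)
    (hβ : ∀ v, β v = Real.sqrt ((1 / (θ * κ * a)) *
      ∑ k ∈ Finset.Icc 1 (I - 1), (M k - M (k + 1)) * ∫ t in vlow..v, t * f k t)) :
    (∀ v ∈ Set.Icc vlow vhigh,
        c (β v) = ∑ k ∈ Finset.Icc 1 (I - 1), (M k - M (k + 1)) * ∫ t in vlow..v, t * f k t)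
    ∧ β vlow = 0
    ∧ (∀ v ∈ Set.Ioo vlow vhigh,
        HasDerivAt (fun w => c (β w))
          (v * ∑ k ∈ Finset.Icc 1 I, (f k v - f (k - 1) v) * M k) v) :=
  stmt0_general I hI θ κ a hθ hκ ha vlow vhigh hvl M hM f hf0 hfI hfc hfnn c β hc hβ
end

section
/- Under the symmetric equilibrium β with c(β(v)) = Σ_{k=1}^{I-1}(M_k − M_{k+1}) ∫_{v_low}^v t f_{k:I-1}(t) dt, the expected utility of a bidder with valuation v equals u(v) = ∫_{v_low}^{v} Σ_{k=1}^{I} (F_{k:I-1}(t) − F_{k-1:I-1}(t)) M_k dt ≥ 0, so in particular u(v_low) = 0 and u is nondecreasing in v. -/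
open MeasureTheory intervalIntegral

/-! By Abel summation, the interim reward `Σ_k (F_k - F_{k-1}) M_k` equals
`Σ_k (M_k - M_{k+1}) F_k`, so `u(v) = Σ_k (M_k - M_{k+1}) (v F_k(v) - ∫_{vlow}^v t f_k(t) dt)`.
Integrating `t f_k(t)` by parts, and using `F_k(vlow) = 0`, each bracket is `∫_{vlow}^v F_k`.
Nonnegativity and monotonicity then come from the nonnegativity of the integrand. -/

theorem Finset.sum_Icc_sub_mul {R : Type*} [CommRing R] {a b : ℕ → R} (ha : a 0 = 0) (n : ℕ) :
    ∑ k ∈ Finset.Icc 1 n, (a k - a (k - 1)) * b k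
      = a n * b n + ∑ k ∈ Finset.Icc 1 (n - 1), (b k - b (k + 1)) * a k := by
  induction n with
  | zero => simp [ha]
  | succ n ih =>
    rw [Finset.sum_Icc_succ_top (by omega), ih]
    rcases n with _ | n
    · simp [ha]
    · simp only [Nat.add_sub_cancel]
      rw [Finset.sum_Icc_succ_top (by omega : 1 ≤ n + 1)]
      ring

theorem intervalIntegral.integral_id_mul_deriv {F f : ℝ → ℝ} {a b : ℝ}
    (hF : ∀ t ∈ Set.uIcc a b, HasDerivAt F (f t) t) (hf : IntervalIntegrable f volume a b) :
    ∫ t in a..b, t * f t = b * F b - a * F a - ∫ t in a..b, F t := by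
  simpa using integral_mul_deriv_eq_deriv_mul (fun t _ => hasDerivAt_id t) hF
    intervalIntegrable_const hf

theorem intervalIntegral.monotoneOn_integral_of_nonneg {g : ℝ → ℝ} {a b : ℝ}
    (hg : IntervalIntegrable g volume a b) (hpos : ∀ t ∈ Set.Icc a b, 0 ≤ g t) :
    MonotoneOn (fun v => ∫ t in a..v, g t) (Set.Icc a b) := by
  intro x hx y hy hxy
  refine integral_mono_interval le_rfl hx.1 hxy ?_ (hg.mono_set ?_)
  · exact ae_restrict_of_forall_mem measurableSet_Ioc fun t ht =>
      hpos t ⟨ht.1.le, ht.2.trans hy.2⟩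
  · exact Set.uIcc_subset_uIcc_left (Set.mem_uIcc_of_le hy.1 hy.2)

theorem stmt6_general (I : ℕ) (vlow vhigh : ℝ) (hv : vlow < vhigh)
    (M : ℕ → ℝ)
    (hMnn : ∀ k, 0 ≤ M k) (hMI : M I = 0)
    (F f : ℕ → ℝ → ℝ)
    (hF0 : ∀ v, F 0 v = 0)
    (hFlow : ∀ k ∈ Finset.Icc 1 (I - 1), F k vlow = 0)
    (hFderiv : ∀ k ∈ Finset.Icc 1 (I - 1), ∀ v ∈ Set.Icc vlow vhigh,
      HasDerivAt (F k) (f k v) v)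
    (hfc : ∀ k ∈ Finset.Icc 1 (I - 1), ContinuousOn (f k) (Set.Icc vlow vhigh))
    (hFmono : ∀ k ∈ Finset.Icc 1 I, ∀ v ∈ Set.Icc vlow vhigh, F (k - 1) v ≤ F k v)
    (c β u : ℝ → ℝ)
    (heq : ∀ v ∈ Set.Icc vlow vhigh,
      c (β v) = ∑ k ∈ Finset.Icc 1 (I - 1), (M k - M (k + 1)) * ∫ t in vlow..v, t * f k t)
    (hu : ∀ v, u v = v * (∑ k ∈ Finset.Icc 1 I, (F k v - F (k - 1) v) * M k) - c (β v)) :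
    (∀ v ∈ Set.Icc vlow vhigh,
      u v = ∫ t in vlow..v, ∑ k ∈ Finset.Icc 1 I, (F k t - F (k - 1) t) * M k)
    ∧ u vlow = 0
    ∧ MonotoneOn u (Set.Icc vlow vhigh)
    ∧ (∀ v ∈ Set.Icc vlow vhigh, 0 ≤ u v) := by
  have hsum (t : ℝ) : ∑ k ∈ Finset.Icc 1 I, (F k t - F (k - 1) t) * M k
      = ∑ k ∈ Finset.Icc 1 (I - 1), (M k - M (k + 1)) * F k t := by
    simpa [hMI] using Finset.sum_Icc_sub_mul (a := (F · t)) (b := M) (hF0 t) I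
  have hFcont : ∀ k ∈ Finset.Icc 1 (I - 1), ContinuousOn (F k) (Set.Icc vlow vhigh) :=
    fun k hk t ht => (hFderiv k hk t ht).continuousAt.continuousWithinAt
  have hint : IntervalIntegrable
      (fun t => ∑ k ∈ Finset.Icc 1 I, (F k t - F (k - 1) t) * M k) volume vlow vhigh := by
    simp_rw [hsum]
    exact (continuousOn_finsetSum _ fun k hk => continuousOn_const.mul (hFcont k hk)
      ).intervalIntegrable_of_Icc hv.le
  have hformula : ∀ v ∈ Set.Icc vlow vhigh,
      u v = ∫ t in vlow..v, ∑ k ∈ Finset.Icc 1 I, (F k t - F (k - 1) t) * M k := by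
    intro v hvI
    have hsub : Set.uIcc vlow v ⊆ Set.Icc vlow vhigh := by
      rw [Set.uIcc_of_le hvI.1]; exact Set.Icc_subset_Icc_right hvI.2
    simp_rw [hu, heq v hvI, hsum]
    rw [intervalIntegral.integral_finsetSum, Finset.mul_sum, ← Finset.sum_sub_distrib]
    · refine Finset.sum_congr rfl fun k hk => ?_
      rw [intervalIntegral.integral_const_mul,
        integral_id_mul_deriv (fun t ht => hFderiv k hk t (hsub ht))
          ((hfc k hk).mono hsub).intervalIntegrable, hFlow k hk]
      ring
    · exact fun k hk => (continuousOn_const.mul ((hFcont k hk).mono hsub)).intervalIntegrable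
  have hlow : u vlow = 0 := by rw [hformula vlow ⟨le_rfl, hv.le⟩, integral_same]
  have hmono : MonotoneOn u (Set.Icc vlow vhigh) := by
    refine (monotoneOn_integral_of_nonneg hint fun t ht => ?_).congr
      fun v hvI => (hformula v hvI).symm
    exact Finset.sum_nonneg fun k hk => mul_nonneg (sub_nonneg.mpr (hFmono k hk t ht)) (hMnn k)
  exact ⟨hformula, hlow, hmono, fun v hvI => hlow ▸ hmono ⟨le_rfl, hv.le⟩ hvI hvI.1⟩

/-- Under the symmetric equilibrium `c(β(v)) = Σ_{k=1}^{I-1}(M_k - M_{k+1}) ∫_{vlow}^v t f_{k:I-1}`,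
the equilibrium utility `u(v) = v Σ_{k=1}^I (F_{k:I-1}(v) - F_{k-1:I-1}(v)) M_k - c(β(v))`
equals `∫_{vlow}^v Σ_{k=1}^I (F_{k:I-1}(t) - F_{k-1:I-1}(t)) M_k dt`; in particular
`u(vlow) = 0`, `u` is nondecreasing and nonnegative on `[vlow, vhigh]`. -/
theorem stmt6 (I : ℕ) (hI : 2 ≤ I) (vlow vhigh : ℝ) (hv : vlow < vhigh) (hvl : 0 ≤ vlow)
    (M : ℕ → ℝ) (hM : ∀ k ∈ Finset.Icc 1 (I - 1), M (k + 1) ≤ M k)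
    (hMnn : ∀ k, 0 ≤ M k) (hMI : M I = 0)
    (F f : ℕ → ℝ → ℝ)
    (hF0 : ∀ v, F 0 v = 0) (hFI : ∀ v, F I v = 1)
    (hf0 : ∀ v, f 0 v = 0) (hfI : ∀ v, f I v = 0)
    (hFlow : ∀ k ∈ Finset.Icc 1 (I - 1), F k vlow = 0)
    (hFderiv : ∀ k ∈ Finset.Icc 1 (I - 1), ∀ v ∈ Set.Icc vlow vhigh,
      HasDerivAt (F k) (f k v) v)
    (hfc : ∀ k ∈ Finset.Icc 1 (I - 1), ContinuousOn (f k) (Set.Icc vlow vhigh))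
    (hFmono : ∀ k ∈ Finset.Icc 1 I, ∀ v ∈ Set.Icc vlow vhigh, F (k - 1) v ≤ F k v)
    (c β u : ℝ → ℝ)
    (heq : ∀ v ∈ Set.Icc vlow vhigh,
      c (β v) = ∑ k ∈ Finset.Icc 1 (I - 1), (M k - M (k + 1)) * ∫ t in vlow..v, t * f k t)
    (hu : ∀ v, u v = v * (∑ k ∈ Finset.Icc 1 I, (F k v - F (k - 1) v) * M k) - c (β v)) :
    (∀ v ∈ Set.Icc vlow vhigh,
      u v = ∫ t in vlow..v, ∑ k ∈ Finset.Icc 1 I, (F k t - F (k - 1) t) * M k)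
    ∧ u vlow = 0
    ∧ MonotoneOn u (Set.Icc vlow vhigh)
    ∧ (∀ v ∈ Set.Icc vlow vhigh, 0 ≤ u v) :=
  stmt6_general I vlow vhigh hv M hMnn hMI F f hF0 hFlow hFderiv hfc hFmono c β u heq hu
end

section
/- With quadratic cost c(z) = θκa z² (so c is strictly convex with c(0)=c'(0)=0) and i.i.d. uniform valuations on [0,1], the winner-take-all reward structure is not optimal for the auctioneer when I ≥ 3: splitting the prize as M_1 = σ − ε, M_2 = ε for small ε > 0 yields strictly higher expected total equilibrium bid from the top K ≥ 2 bidders, i.e., d/dε [ K ∫_0^1 β_ε(v) dv ] at ε = 0+ is strictly positive, where the equilibrium bid β_ε is given by c(β_ε(v)) = (σ−2ε) (I−1)v^I/I + ε·h(v) with h(v) = ∫_0^v t (f_{1:I-1}+f_{2:I-1})(t) dt. -/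
open MeasureTheory intervalIntegral

section auxStmt9

private lemma sqrt_pow_eq' (v : ℝ) (hv : 0 ≤ v) (m : ℕ) :
    Real.sqrt (v ^ m) = Real.sqrt v ^ m := by
  rw [show v ^ m = (Real.sqrt v ^ m) ^ 2 by
        rw [← pow_mul, mul_comm, pow_mul, Real.sq_sqrt hv],
    Real.sqrt_sq (pow_nonneg (Real.sqrt_nonneg v) m)]

private lemma sqrt_diff_eq' {x y : ℝ} (hx : 0 ≤ x) (hy : 0 < y) :
    Real.sqrt x - Real.sqrt y = (x - y) / (Real.sqrt x + Real.sqrt y) := by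
  have hs : 0 < Real.sqrt x + Real.sqrt y :=
    add_pos_of_nonneg_of_pos (Real.sqrt_nonneg x) (Real.sqrt_pos.2 hy)
  rw [eq_div_iff hs.ne']
  linear_combination Real.sq_sqrt hx - Real.sq_sqrt hy.le

private lemma integral_sqrt_pow' (m : ℕ) :
    (∫ v in (0:ℝ)..1, Real.sqrt v ^ m) = 2 / ((m:ℝ) + 2) := by
  have h : Set.EqOn (fun v : ℝ => Real.sqrt v ^ m) (fun v : ℝ => v ^ ((m:ℝ)/2))
      (Set.uIcc (0:ℝ) 1) := by
    intro v hv
    rw [Set.uIcc_of_le zero_le_one] at hv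
    simp only
    rw [Real.sqrt_eq_rpow, ← Real.rpow_natCast (v ^ ((1:ℝ)/2)) m, ← Real.rpow_mul hv.1]
    congr 1
    ring
  rw [intervalIntegral.integral_congr h,
    integral_rpow (Or.inl (by linarith [show (0:ℝ) ≤ (m:ℝ)/2 by positivity]))]
  rw [Real.one_rpow, Real.zero_rpow (by positivity)]
  have h1 : (m:ℝ)/2 + 1 ≠ 0 := by positivity
  have h2 : (m:ℝ) + 2 ≠ 0 := by positivity
  rw [div_eq_div_iff h1 h2]
  ring

private noncomputable def Apoly (J : ℕ) (v : ℝ) : ℝ := ((J:ℝ)+2)/((J:ℝ)+3) * v^(J+3)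

private noncomputable def Cpoly (J : ℕ) (v : ℝ) : ℝ :=
  ((J:ℝ)+1) * v^(J+2) - ((J:ℝ)+2)^2/((J:ℝ)+3) * v^(J+3)

end auxStmt9

set_option maxHeartbeats 1000000 in
/-- The winner-take-all reward structure is not optimal: for `I ≥ 3` bidders with i.i.d.
uniform-[0,1] valuations and quadratic cost `c z = θκa z²`, perturbing the prizes to
`(σ-ε, ε, 0, …, 0)` with equilibrium
`c(β_ε(v)) = (σ-2ε)∫_0^v t f_{1:I-1}(t)dt + ε ∫_0^v t (f_{1:I-1}(t)+f_{2:I-1}(t))dt`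
makes the auctioneer payoff `ε ↦ K ∫_0^1 β_ε(v) dv` have a strictly positive one-sided
derivative at `ε = 0`. -/
theorem stmt9 (I K : ℕ) (hI : 3 ≤ I) (hK : 2 ≤ K) (hKI : K ≤ I)
    (σ θ κ a : ℝ) (hσ : 0 < σ) (hθ : 0 < θ) (hκ : 0 < κ) (ha : 0 < a)
    (f : ℕ → ℝ → ℝ)
    (hf : ∀ k, 1 ≤ k → k ≤ I - 1 → ∀ t : ℝ,
      f k t = (((I - 1).factorial : ℝ) / ((k - 1).factorial * (I - 1 - k).factorial))
        * t ^ (I - 1 - k) * (1 - t) ^ (k - 1))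
    (β : ℝ → ℝ → ℝ)
    (hβ : ∀ ε v : ℝ, β ε v = Real.sqrt
      (((σ - 2 * ε) * (∫ t in (0:ℝ)..v, t * f 1 t)
        + ε * (∫ t in (0:ℝ)..v, t * (f 1 t + f 2 t))) / (θ * κ * a))) :
    ∃ D : ℝ, 0 < D ∧
      HasDerivWithinAt (fun ε : ℝ => (K : ℝ) * ∫ v in (0:ℝ)..1, β ε v)
        D (Set.Ici 0) 0 := by
  obtain ⟨J, rfl⟩ : ∃ J, I = J + 3 := ⟨I - 3, by omega⟩
  set c0 : ℝ := θ * κ * a with hc0def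
  have hc0 : 0 < c0 := by positivity
  have hJfac0 : ((J.factorial : ℕ) : ℝ) ≠ 0 := by
    exact_mod_cast (Nat.factorial_pos J).ne'
  have hJ1 : ((J:ℝ)+1) ≠ 0 := by positivity
  have hJ2 : ((J:ℝ)+2) ≠ 0 := by positivity
  have hJ3 : ((J:ℝ)+3) ≠ 0 := by positivity
  have hfac1 : (((J+1).factorial : ℕ) : ℝ) = ((J:ℝ)+1) * (J.factorial : ℝ) := by
    rw [Nat.factorial_succ]; push_cast; ring
  have hfac2 : (((J+2).factorial : ℕ) : ℝ)
      = ((J:ℝ)+2) * (((J:ℝ)+1) * (J.factorial : ℝ)) := by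
    rw [Nat.factorial_succ, ← hfac1]; push_cast; ring
  -- explicit densities
  have hf1 : ∀ t : ℝ, f 1 t = ((J:ℝ)+2) * t ^ (J+1) := by
    intro t
    have h := hf 1 (by omega) (by omega) t
    rw [h]
    simp only [show J+3-1 = J+2 from rfl, show J+2-1 = J+1 from rfl,
      show (1:ℕ)-1 = 0 from rfl,
      Nat.factorial_zero, pow_zero, Nat.cast_one, one_mul, mul_one]
    rw [hfac2, hfac1]
    field_simp
  have hf2 : ∀ t : ℝ, f 2 t = ((J:ℝ)+2) * ((J:ℝ)+1) * t ^ J * (1 - t) := by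
    intro t
    have h := hf 2 (by omega) (by omega) t
    rw [h]
    simp only [show J+3-1 = J+2 from rfl, show J+2-2 = J from rfl,
      show (2:ℕ)-1 = 1 from rfl,
      Nat.factorial_one, pow_one, Nat.cast_one, one_mul]
    rw [hfac2]
    field_simp
    try ring
  -- the two interval integrals
  have hInt1 : ∀ v : ℝ, (∫ t in (0:ℝ)..v, t * f 1 t)
      = ((J:ℝ)+2)/((J:ℝ)+3) * v^(J+3) := by
    intro v
    have he : Set.EqOn (fun t : ℝ => t * f 1 t)
        (fun t : ℝ => ((J:ℝ)+2) * t ^ (J+2)) (Set.uIcc 0 v) := by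
      intro t _
      simp only [hf1 t]
      ring
    rw [intervalIntegral.integral_congr he, intervalIntegral.integral_const_mul,
      integral_pow, zero_pow (by omega : J+2+1 ≠ 0)]
    push_cast
    ring
  have hInt2 : ∀ v : ℝ, (∫ t in (0:ℝ)..v, t * (f 1 t + f 2 t))
      = ((J:ℝ)+2)/((J:ℝ)+3) * v^(J+3)
        + ((J:ℝ)+2) * ((J:ℝ)+1) * (v^(J+2)/((J:ℝ)+2) - v^(J+3)/((J:ℝ)+3)) := by
    intro v
    have he : Set.EqOn (fun t : ℝ => t * (f 1 t + f 2 t))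
        (fun t : ℝ => ((J:ℝ)+2) * t ^ (J+2)
          + ((J:ℝ)+2) * ((J:ℝ)+1) * (t ^ (J+1) - t ^ (J+2))) (Set.uIcc 0 v) := by
      intro t _
      simp only [hf1 t, hf2 t]
      ring
    rw [intervalIntegral.integral_congr he, intervalIntegral.integral_add
        ((by fun_prop : Continuous fun t : ℝ => ((J:ℝ)+2) * t ^ (J+2)).intervalIntegrable 0 v)
        ((by fun_prop : Continuous fun t : ℝ =>
          ((J:ℝ)+2) * ((J:ℝ)+1) * (t ^ (J+1) - t ^ (J+2))).intervalIntegrable 0 v),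
      intervalIntegral.integral_const_mul, intervalIntegral.integral_const_mul,
      intervalIntegral.integral_sub
        ((by fun_prop : Continuous fun t : ℝ => t ^ (J+1)).intervalIntegrable 0 v)
        ((by fun_prop : Continuous fun t : ℝ => t ^ (J+2)).intervalIntegrable 0 v),
      integral_pow, integral_pow,
      zero_pow (by omega : J+2+1 ≠ 0), zero_pow (by omega : J+1+1 ≠ 0)]
    push_cast
    ring
  -- clean form of β
  have hβ' : ∀ ε v : ℝ, β ε v
      = Real.sqrt ((σ * Apoly J v + ε * Cpoly J v) / c0) := by
    intro ε v
    rw [hβ ε v, hInt1 v, hInt2 v]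
    congr 1
    unfold Apoly Cpoly
    field_simp
    ring
  have hβ0 : ∀ v : ℝ, β 0 v = Real.sqrt (σ * Apoly J v / c0) := by
    intro v
    rw [hβ' 0 v, zero_mul, add_zero]
  -- square-root structure
  have hsA : ∀ v : ℝ, 0 ≤ v → Real.sqrt (σ * Apoly J v / c0)
      = Real.sqrt (σ * (((J:ℝ)+2)/((J:ℝ)+3)) / c0) * Real.sqrt v ^ (J+3) := by
    intro v hv
    unfold Apoly
    rw [show σ * (((J:ℝ)+2)/((J:ℝ)+3) * v ^ (J+3)) / c0
        = (σ * (((J:ℝ)+2)/((J:ℝ)+3)) / c0) * v ^ (J+3) by ring,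
      Real.sqrt_mul (by positivity), sqrt_pow_eq' v hv]
  set s0 : ℝ := Real.sqrt (σ * (((J:ℝ)+2)/((J:ℝ)+3)) / c0) with hs0def
  have hs0 : 0 < s0 := by
    rw [hs0def]; exact Real.sqrt_pos.2 (by positivity)
  set δ : ℝ := σ / (2*((J:ℝ)+2)) with hδdef
  have hδ : 0 < δ := by rw [hδdef]; positivity
  -- nonnegativity of the expression under the square root
  have hPnn : ∀ ε : ℝ, 0 ≤ ε → ε ≤ δ → ∀ v : ℝ, 0 ≤ v →
      0 ≤ σ * Apoly J v + ε * Cpoly J v := by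
    intro ε hε hεδ v hv
    have h1 : σ * Apoly J v + ε * Cpoly J v
        = (ε*((J:ℝ)+1))*v^(J+2)
          + ((σ*((J:ℝ)+2) - ε*((J:ℝ)+2)^2)/((J:ℝ)+3))*v^(J+3) := by
      unfold Apoly Cpoly; field_simp; ring
    have hJ0 : (0:ℝ) ≤ (J:ℝ) := Nat.cast_nonneg J
    have h3 : ε * (2*((J:ℝ)+2)) ≤ σ := by
      rw [hδdef] at hεδ
      calc ε * (2*((J:ℝ)+2)) ≤ (σ / (2*((J:ℝ)+2))) * (2*((J:ℝ)+2)) :=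
            mul_le_mul_of_nonneg_right hεδ (by positivity)
        _ = σ := by field_simp
    have h2 : ε*((J:ℝ)+2)^2 ≤ σ*((J:ℝ)+2) := by nlinarith [mul_nonneg hε hJ0]
    rw [h1]
    have hb : 0 ≤ (σ*((J:ℝ)+2) - ε*((J:ℝ)+2)^2)/((J:ℝ)+3) := by
      apply div_nonneg _ (by positivity)
      linarith
    positivity
  -- key identity for the difference quotient
  have hFid : ∀ ε ∈ Set.Ioc (0:ℝ) δ, ∀ v ∈ Set.Ioc (0:ℝ) 1,
      (β ε v - β 0 v)/ε = Cpoly J v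
        / (c0 * (Real.sqrt ((σ * Apoly J v + ε * Cpoly J v)/c0)
            + Real.sqrt (σ * Apoly J v / c0))) := by
    intro ε hε v hv
    have hA : 0 < Apoly J v := by
      unfold Apoly; exact mul_pos (by positivity) (pow_pos hv.1 _)
    have hy : 0 < σ * Apoly J v / c0 := by positivity
    have hx : 0 ≤ (σ * Apoly J v + ε * Cpoly J v)/c0 :=
      div_nonneg (hPnn ε hε.1.le hε.2 v hv.1.le) hc0.le
    have hsum : 0 < Real.sqrt ((σ * Apoly J v + ε * Cpoly J v)/c0)
        + Real.sqrt (σ * Apoly J v / c0) :=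
      add_pos_of_nonneg_of_pos (Real.sqrt_nonneg _) (Real.sqrt_pos.2 hy)
    rw [hβ' ε v, hβ0 v, sqrt_diff_eq' hx hy,
      show (σ * Apoly J v + ε * Cpoly J v)/c0 - σ * Apoly J v / c0
        = ε * Cpoly J v / c0 by ring]
    field_simp [hε.1.ne']
  -- the a.e. limit function
  set ψ : ℝ → ℝ := fun v =>
    (((J:ℝ)+1) * Real.sqrt v ^ (J+1) - ((J:ℝ)+2)^2/((J:ℝ)+3) * Real.sqrt v ^ (J+3))
      / (2*c0*s0) with hψdef
  have hlim : ∀ v ∈ Set.Ioc (0:ℝ) 1,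
      Filter.Tendsto (fun ε => (β ε v - β 0 v)/ε)
        (nhdsWithin 0 (Set.Ioi 0)) (nhds (ψ v)) := by
    intro v hv
    have hsv : 0 < Real.sqrt v := Real.sqrt_pos.2 hv.1
    have hA : 0 < Apoly J v := by
      unfold Apoly; exact mul_pos (by positivity) (pow_pos hv.1 _)
    have hy : 0 < σ * Apoly J v / c0 := by positivity
    have hyp : 0 < Real.sqrt (σ * Apoly J v / c0) := Real.sqrt_pos.2 hy
    have hys : Real.sqrt (σ * Apoly J v / c0) = s0 * Real.sqrt v ^ (J+3) := hsA v hv.1.le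
    have hψv : ψ v = Cpoly J v / (c0 * (2 * Real.sqrt (σ * Apoly J v / c0))) := by
      simp only [hψdef]
      rw [hys]
      unfold Cpoly
      rw [show v ^ (J+2) = (Real.sqrt v ^ 2) ^ (J+2) by rw [Real.sq_sqrt hv.1.le],
        show v ^ (J+3) = (Real.sqrt v ^ 2) ^ (J+3) by rw [Real.sq_sqrt hv.1.le]]
      field_simp
      ring
    have hcontd : Continuous (fun ε : ℝ => c0 * (Real.sqrt ((σ * Apoly J v + ε * Cpoly J v)/c0)
        + Real.sqrt (σ * Apoly J v / c0))) := by fun_prop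
    have h0 : c0 * (Real.sqrt ((σ * Apoly J v + 0 * Cpoly J v)/c0)
        + Real.sqrt (σ * Apoly J v / c0)) = c0 * (2 * Real.sqrt (σ * Apoly J v / c0)) := by
      rw [zero_mul, add_zero]; ring
    have hd : Filter.Tendsto (fun ε : ℝ => c0 * (Real.sqrt ((σ * Apoly J v + ε * Cpoly J v)/c0)
        + Real.sqrt (σ * Apoly J v / c0))) (nhds 0)
        (nhds (c0 * (2 * Real.sqrt (σ * Apoly J v / c0)))) := by
      have := hcontd.tendsto 0
      rwa [h0] at this
    have hne : c0 * (2 * Real.sqrt (σ * Apoly J v / c0)) ≠ 0 := by positivity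
    have hG : Filter.Tendsto (fun ε : ℝ => Cpoly J v
        / (c0 * (Real.sqrt ((σ * Apoly J v + ε * Cpoly J v)/c0)
            + Real.sqrt (σ * Apoly J v / c0)))) (nhds 0) (nhds (ψ v)) := by
      rw [hψv]
      exact Filter.Tendsto.div tendsto_const_nhds hd hne
    refine (hG.mono_left nhdsWithin_le_nhds).congr'
      (Filter.eventuallyEq_of_mem (Ioc_mem_nhdsGT_of_mem ⟨le_refl (0:ℝ), hδ⟩)
        fun ε hε => (hFid ε hε v hv).symm)
  -- the dominating function
  set cC : ℝ := ((J:ℝ)+1) + ((J:ℝ)+2)^2/((J:ℝ)+3) with hcCdef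
  have hcC : 0 < cC := by rw [hcCdef]; positivity
  set bound : ℝ → ℝ := fun v => cC/(c0*s0) * Real.sqrt v ^ (J+1) with hbounddef
  have hbd : ∀ ε ∈ Set.Ioc (0:ℝ) δ, ∀ v ∈ Set.Ioc (0:ℝ) 1,
      ‖(β ε v - β 0 v)/ε‖ ≤ bound v := by
    intro ε hε v hv
    have hsv : 0 < Real.sqrt v := Real.sqrt_pos.2 hv.1
    have hA : 0 < Apoly J v := by
      unfold Apoly; exact mul_pos (by positivity) (pow_pos hv.1 _)
    have hy : 0 < σ * Apoly J v / c0 := by positivity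
    have hyp : 0 < Real.sqrt (σ * Apoly J v / c0) := Real.sqrt_pos.2 hy
    have hys : Real.sqrt (σ * Apoly J v / c0) = s0 * Real.sqrt v ^ (J+3) := hsA v hv.1.le
    have hsum : 0 < Real.sqrt ((σ * Apoly J v + ε * Cpoly J v)/c0)
        + Real.sqrt (σ * Apoly J v / c0) :=
      add_pos_of_nonneg_of_pos (Real.sqrt_nonneg _) hyp
    have hCb : |Cpoly J v| ≤ cC * v^(J+2) := by
      have hvI : v^(J+3) ≤ v^(J+2) := pow_le_pow_of_le_one hv.1.le hv.2 (by omega)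
      have h1 : 0 ≤ ((J:ℝ)+1) * v^(J+2) :=
        mul_nonneg (by positivity) (pow_nonneg hv.1.le _)
      have h2 : 0 ≤ ((J:ℝ)+2)^2/((J:ℝ)+3) * v^(J+3) :=
        mul_nonneg (by positivity) (pow_nonneg hv.1.le _)
      have h4 : ((J:ℝ)+2)^2/((J:ℝ)+3) * v^(J+3) ≤ ((J:ℝ)+2)^2/((J:ℝ)+3) * v^(J+2) :=
        mul_le_mul_of_nonneg_left hvI (by positivity)
      have hexp : Cpoly J v
          = ((J:ℝ)+1) * v^(J+2) - ((J:ℝ)+2)^2/((J:ℝ)+3) * v^(J+3) := rfl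
      rw [hexp]
      calc |((J:ℝ)+1) * v^(J+2) - ((J:ℝ)+2)^2/((J:ℝ)+3) * v^(J+3)|
          ≤ |((J:ℝ)+1) * v^(J+2)| + |((J:ℝ)+2)^2/((J:ℝ)+3) * v^(J+3)| := abs_sub _ _
        _ = ((J:ℝ)+1) * v^(J+2) + ((J:ℝ)+2)^2/((J:ℝ)+3) * v^(J+3) := by
            rw [abs_of_nonneg h1, abs_of_nonneg h2]
        _ ≤ cC * v^(J+2) := by rw [hcCdef]; nlinarith [h4]
    rw [hFid ε hε v hv, Real.norm_eq_abs, abs_div,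
      abs_of_pos (by positivity : (0:ℝ) < c0 * (Real.sqrt ((σ * Apoly J v + ε * Cpoly J v)/c0)
        + Real.sqrt (σ * Apoly J v / c0)))]
    calc |Cpoly J v| / (c0 * (Real.sqrt ((σ * Apoly J v + ε * Cpoly J v)/c0)
            + Real.sqrt (σ * Apoly J v / c0)))
        ≤ |Cpoly J v| / (c0 * (s0 * Real.sqrt v ^ (J+3))) := by
          apply div_le_div_of_nonneg_left (abs_nonneg _) (by positivity)
          apply mul_le_mul_of_nonneg_left _ hc0.le
          rw [← hys]
          linarith [Real.sqrt_nonneg ((σ * Apoly J v + ε * Cpoly J v)/c0)]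
      _ ≤ (cC * v^(J+2)) / (c0 * (s0 * Real.sqrt v ^ (J+3))) :=
          (div_le_div_iff_of_pos_right (by positivity)).2 hCb
      _ = bound v := by
          simp only [hbounddef]
          rw [show v ^ (J+2) = (Real.sqrt v ^ 2) ^ (J+2) by rw [Real.sq_sqrt hv.1.le]]
          field_simp
          ring
  -- continuity and integrability
  have hβc : ∀ ε : ℝ, Continuous (fun v => β ε v) := by
    intro ε
    simp only [hβ']
    unfold Apoly Cpoly
    fun_prop
  have hβint : ∀ ε : ℝ, MeasureTheory.IntegrableOn (fun v => β ε v) (Set.Ioc (0:ℝ) 1) :=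
    fun ε => (hβc ε).integrableOn_Ioc
  have hmem : Set.Ioc (0:ℝ) δ ∈ nhdsWithin (0:ℝ) (Set.Ioi 0) :=
    Ioc_mem_nhdsGT_of_mem ⟨le_refl (0:ℝ), hδ⟩
  have hboundc : Continuous bound := by
    rw [hbounddef]
    fun_prop
  -- dominated convergence
  have hDCT : Filter.Tendsto (fun ε => ∫ v in Set.Ioc (0:ℝ) 1, (β ε v - β 0 v)/ε)
      (nhdsWithin 0 (Set.Ioi 0)) (nhds (∫ v in Set.Ioc (0:ℝ) 1, ψ v)) := by
    apply MeasureTheory.tendsto_integral_filter_of_dominated_convergence bound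
    · exact Filter.Eventually.of_forall fun ε =>
        (((hβc ε).sub (hβc 0)).div_const ε).aestronglyMeasurable
    · refine Filter.eventually_of_mem hmem fun ε hε => ?_
      exact (ae_restrict_iff' measurableSet_Ioc).2
        (Filter.Eventually.of_forall fun v hv => hbd ε hε v hv)
    · exact hboundc.integrableOn_Ioc
    · exact (ae_restrict_iff' measurableSet_Ioc).2
        (Filter.Eventually.of_forall fun v hv => hlim v hv)
  -- the slope identity
  have hslope : ∀ ε ∈ Set.Ioc (0:ℝ) δ,
      slope (fun ε : ℝ => (K : ℝ) * ∫ v in (0:ℝ)..1, β ε v) 0 ε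
        = (K:ℝ) * ∫ v in Set.Ioc (0:ℝ) 1, (β ε v - β 0 v)/ε := by
    intro ε hε
    have hv1 : ∫ v in Set.Ioc (0:ℝ) 1, (β ε v - β 0 v)/ε
        = ((∫ v in Set.Ioc (0:ℝ) 1, β ε v) - ∫ v in Set.Ioc (0:ℝ) 1, β 0 v)/ε := by
      rw [MeasureTheory.integral_div, MeasureTheory.integral_sub (hβint ε) (hβint 0)]
    rw [hv1]
    simp only [slope_def_field, sub_zero]
    rw [intervalIntegral.integral_of_le zero_le_one,
      intervalIntegral.integral_of_le zero_le_one]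
    ring
  -- value and positivity of the limit integral
  have hDval : (∫ v in Set.Ioc (0:ℝ) 1, ψ v)
      = (((J:ℝ)+1) * (2/((J:ℝ)+3)) - ((J:ℝ)+2)^2/((J:ℝ)+3) * (2/((J:ℝ)+5))) / (2*c0*s0) := by
    rw [← intervalIntegral.integral_of_le zero_le_one]
    simp only [hψdef]
    rw [intervalIntegral.integral_div,
      intervalIntegral.integral_sub
        ((by fun_prop : Continuous fun v : ℝ =>
          ((J:ℝ)+1) * Real.sqrt v ^ (J+1)).intervalIntegrable 0 1)
        ((by fun_prop : Continuous fun v : ℝ =>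
          ((J:ℝ)+2)^2/((J:ℝ)+3) * Real.sqrt v ^ (J+3)).intervalIntegrable 0 1),
      intervalIntegral.integral_const_mul, intervalIntegral.integral_const_mul,
      integral_sqrt_pow', integral_sqrt_pow']
    push_cast
    ring
  have hDpos : 0 < ∫ v in Set.Ioc (0:ℝ) 1, ψ v := by
    rw [hDval]
    have key : (((J:ℝ)+1) * (2/((J:ℝ)+3)) - ((J:ℝ)+2)^2/((J:ℝ)+3) * (2/((J:ℝ)+5)))
        = 2*(2*(J:ℝ)+1)/(((J:ℝ)+3)*((J:ℝ)+5)) := by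
      field_simp
      ring
    rw [key]
    positivity
  refine ⟨(K:ℝ) * ∫ v in Set.Ioc (0:ℝ) 1, ψ v, ?_, ?_⟩
  · have hKpos : (0:ℝ) < K := by exact_mod_cast (by omega : 0 < K)
    exact mul_pos hKpos hDpos
  · rw [hasDerivWithinAt_iff_tendsto_slope, Set.Ici_sdiff_left]
    exact (hDCT.const_mul (K:ℝ)).congr'
      (Filter.eventuallyEq_of_mem hmem fun ε hε => (hslope ε hε).symm)
end

section
/- Given that each of I workers can store 1/m of matrix A and 1/n of matrix B, polynomial codes achieve recovery threshold K = mn: the evaluations of the polynomial C(x) = Σ_{j=0}^{m-1} Σ_{l=0}^{n-1} A_j^T B_l x^{j + l m} at any mn distinct points in the field determine all mn coefficient blocks A_j^T B_l, since a polynomial of degree at most mn − 1 over a field is uniquely determined by its values at mn distinct points. -/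
open Matrix Polynomial

lemma exp_inj {m n : ℕ} :
    Function.Injective (fun p : Fin m × Fin n => (p.1 : ℕ) + (p.2 : ℕ) * m) := by
  rintro ⟨j, l⟩ ⟨j', l'⟩ h
  have h' : (j : ℕ) + (l : ℕ) * m = (j' : ℕ) + (l' : ℕ) * m := h
  have hj2 := j.2
  have hj'2 := j'.2
  have hj : (j : ℕ) = j' := by
    have h1 : ((j : ℕ) + (l : ℕ) * m) % m = j := by
      rw [Nat.add_mul_mod_self_right, Nat.mod_eq_of_lt hj2]
    have h2 : ((j' : ℕ) + (l' : ℕ) * m) % m = j' := by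
      rw [Nat.add_mul_mod_self_right, Nat.mod_eq_of_lt hj'2]
    rw [← h1, ← h2, h']
  have hm : 0 < m := Nat.pos_of_ne_zero (by rintro rfl; exact absurd hj2 (by simp))
  have hl : (l : ℕ) = l' := by
    have : (l : ℕ) * m = (l' : ℕ) * m := by omega
    exact Nat.eq_of_mul_eq_mul_right hm this
  exact Prod.ext (Fin.ext hj) (Fin.ext hl)

lemma key {F : Type*} [Field F] (m n : ℕ) (hm : 0 < m) (hn : 0 < n)
    (x : Fin (m * n) → F) (hx : Function.Injective x)
    (c : Fin m → Fin n → F)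
    (h : ∀ i, ∑ j : Fin m, ∑ l : Fin n, c j l * x i ^ ((j : ℕ) + (l : ℕ) * m) = 0) :
    ∀ j l, c j l = 0 := by
  classical
  set P : F[X] := ∑ j : Fin m, ∑ l : Fin n, C (c j l) * X ^ ((j : ℕ) + (l : ℕ) * m) with hP
  have hdeg : P.natDegree < m * n := by
    have hle : P.natDegree ≤ m * n - 1 := by
      apply natDegree_sum_le_of_forall_le
      intro j _
      apply natDegree_sum_le_of_forall_le
      intro l _
      refine (natDegree_C_mul_X_pow_le _ _).trans ?_
      have h1 : ((l : ℕ) + 1) * m ≤ n * m := Nat.mul_le_mul_right m l.2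
      rw [Nat.succ_mul, Nat.mul_comm n m] at h1
      have := j.2
      omega
    have := Nat.mul_pos hm hn
    omega
  have hP0 : P = 0 := by
    apply eq_zero_of_natDegree_lt_card_of_eval_eq_zero P hx _ (by simpa using hdeg)
    intro i
    rw [hP]
    simp only [eval_finset_sum, eval_mul, eval_C, eval_pow, eval_X]
    exact h i
  intro j0 l0
  have hc : P.coeff ((j0 : ℕ) + (l0 : ℕ) * m) = c j0 l0 := by
    rw [hP]
    simp only [finset_sum_coeff, coeff_C_mul, coeff_X_pow, mul_ite, mul_one, mul_zero]
    rw [Finset.sum_eq_single j0]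
    · rw [Finset.sum_eq_single l0]
      · simp
      · intro l _ hne
        rw [if_neg]
        intro heq
        have := exp_inj (m := m) (n := n) (a₁ := (j0, l0)) (a₂ := (j0, l)) heq
        exact hne (by simpa using this.symm)
      · simp
    · intro j _ hne
      apply Finset.sum_eq_zero
      intro l _
      rw [if_neg]
      intro heq
      have := exp_inj (m := m) (n := n) (a₁ := (j0, l0)) (a₂ := (j, l)) heq
      exact hne (congrArg Prod.fst this).symm
    · simp
  rw [hP0] at hc
  simpa using hc.symm

/-- Polynomial codes achieve recovery threshold `K = mn`: worker `i`'s computation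
`Ã_iᵀ B̃_i` equals the evaluation of `C(x) = Σ_{j,l} A_jᵀ B_l x^{j+lm}` at `x_i`, and the
evaluations of such a polynomial (degree ≤ mn-1) at any `mn` distinct points determine all
`mn` coefficient blocks `A_jᵀ B_l` uniquely. -/
theorem stmt10 (F : Type*) [Field F] (m n r s t : ℕ) (hm : 0 < m) (hn : 0 < n)
    (A : Fin m → Matrix (Fin s) (Fin r) F) (B : Fin n → Matrix (Fin s) (Fin t) F)
    (x : Fin (m * n) → F) (hx : Function.Injective x) :
    (∀ i : Fin (m * n),
      (∑ j : Fin m, x i ^ (j : ℕ) • A j)ᵀ * (∑ l : Fin n, x i ^ ((l : ℕ) * m) • B l)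
        = ∑ j : Fin m, ∑ l : Fin n, x i ^ ((j : ℕ) + (l : ℕ) * m) • ((A j)ᵀ * B l)) ∧
    (∀ D D' : Fin m → Fin n → Matrix (Fin r) (Fin t) F,
      (∀ i : Fin (m * n),
        ∑ j : Fin m, ∑ l : Fin n, x i ^ ((j : ℕ) + (l : ℕ) * m) • D j l
          = ∑ j : Fin m, ∑ l : Fin n, x i ^ ((j : ℕ) + (l : ℕ) * m) • D' j l) →
      D = D') := by
  constructor
  · intro i
    rw [transpose_sum, Matrix.sum_mul]
    refine Finset.sum_congr rfl fun j _ => ?_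
    rw [Matrix.mul_sum]
    refine Finset.sum_congr rfl fun l _ => ?_
    rw [transpose_smul, Matrix.smul_mul, Matrix.mul_smul, smul_smul, pow_add]
  · intro D D' hDD'
    funext j l
    ext a b
    have key' := key m n hm hn x hx (fun j l => D j l a b - D' j l a b) ?_ j l
    · exact sub_eq_zero.mp key' 
    · intro i
      have := congrArg (fun M => M a b) (hDD' i)
      simp only [Finset.sum_apply, Matrix.sum_apply, Matrix.smul_apply, smul_eq_mul] at this ⊢
      rw [← sub_eq_zero] at this
      rw [← this, ← Finset.sum_sub_distrib]
      refine Finset.sum_congr rfl fun j' _ => ?_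
      rw [← Finset.sum_sub_distrib]
      refine Finset.sum_congr rfl fun l' _ => ?_
      ring
end

section
/- In the symmetric equilibrium of the all-pay auction with strictly increasing bid function β and i.i.d. valuations, a bidder with valuation v who bids β(w) for some w has expected utility U(v, w) = v Σ_{k=1}^I (F_{k:I-1}(w) − F_{k-1:I-1}(w)) M_k − c(β(w)), and truth-telling maximizes it: U(v, v) ≥ U(v, w) for all w ∈ [v_low, v_high], provided β satisfies the equilibrium ODE c'(β(w))β'(w) = w Σ_k (f_{k:I-1}(w) − f_{k-1:I-1}(w)) M_k with β(v_low) = 0 and the term G(w) := Σ_k (F_{k:I-1}(w) − F_{k-1:I-1}(w)) M_k is nondecreasing in w. -/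
/-! By the equilibrium ODE, the envelope term `c'(β w) β'(w)` is exactly `w G'(w)`, so
`∂U/∂w (v, w) = (v - w) G'(w)`. Since `G` is nondecreasing, `G' ≥ 0`, hence `U(v, ·)` increases
on `[vlow, v]` and decreases on `[v, vhigh]`: truth-telling `w = v` is a global maximum. -/

open Set Topology

theorem HasDerivAt.nonneg_of_monotoneOn_of_mem_nhds {𝕜 : Type*} [NontriviallyNormedField 𝕜]
    [LinearOrder 𝕜] [IsStrictOrderedRing 𝕜] [OrderTopology 𝕜] {g : 𝕜 → 𝕜} {g' x : 𝕜}
    {s : Set 𝕜} (hd : HasDerivAt g g' x) (hg : MonotoneOn g s) (hs : s ∈ 𝓝 x) : 0 ≤ g' :=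
  hd.hasDerivWithinAt.nonneg_of_monotoneOn
    ((PerfectSpace.univ_preperfect x trivial).nhds_inter hs) (hg.mono inter_subset_left)

theorem isMaxOn_Icc_of_hasDerivAt_sign {φ φ' : ℝ → ℝ} {a b v : ℝ} (hv : v ∈ Icc a b)
    (hφc : ContinuousOn φ (Icc a b)) (hφ : ∀ x ∈ Ioo a b, HasDerivAt φ (φ' x) x)
    (hleft : ∀ x ∈ Ioo a v, 0 ≤ φ' x) (hright : ∀ x ∈ Ioo v b, φ' x ≤ 0) :
    IsMaxOn φ (Icc a b) v := by
  intro w hw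
  rcases le_total w v with hwv | hvw
  · have hmono : MonotoneOn φ (Icc a v) := by
      refine monotoneOn_of_hasDerivWithinAt_nonneg (f' := φ') (convex_Icc a v)
        (hφc.mono (Icc_subset_Icc_right hv.2)) (fun x hx => ?_) (fun x hx => ?_)
      · rw [interior_Icc] at hx ⊢
        exact (hφ x ⟨hx.1, hx.2.trans_le hv.2⟩).hasDerivWithinAt
      · exact hleft x (by rwa [interior_Icc] at hx)
    exact hmono ⟨hw.1, hwv⟩ ⟨hv.1, le_rfl⟩ hwv
  · have hanti : AntitoneOn φ (Icc v b) := by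
      refine antitoneOn_of_hasDerivWithinAt_nonpos (f' := φ') (convex_Icc v b)
        (hφc.mono (Icc_subset_Icc_left hv.1)) (fun x hx => ?_) (fun x hx => ?_)
      · rw [interior_Icc] at hx ⊢
        exact (hφ x ⟨hv.1.trans_lt hx.1, hx.2⟩).hasDerivWithinAt
      · exact hright x (by rwa [interior_Icc] at hx)
    exact hanti ⟨le_rfl, hv.2⟩ ⟨hvw, hw.2⟩ hvw

theorem hasDerivAt_sum_Icc_sub_mul {F f : ℕ → ℝ → ℝ} (M : ℕ → ℝ) {n : ℕ} {x : ℝ}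
    (hF : ∀ k ≤ n, HasDerivAt (F k) (f k x) x) :
    HasDerivAt (fun y => ∑ k ∈ Finset.Icc 1 n, (F k y - F (k - 1) y) * M k)
      (∑ k ∈ Finset.Icc 1 n, (f k x - f (k - 1) x) * M k) x :=
  HasDerivAt.fun_sum fun k hk =>
    have hkn : k ≤ n := (Finset.mem_Icc.mp hk).2
    ((hF k hkn).sub (hF (k - 1) (by omega))).mul_const (M k)

theorem stmt12_general (I : ℕ) (vlow vhigh : ℝ)
    (M : ℕ → ℝ)
    (F f : ℕ → ℝ → ℝ) (hF0 : ∀ v, F 0 v = 0) (hf0 : ∀ v, f 0 v = 0)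
    (hFderiv : ∀ k ∈ Finset.Icc 1 I, ∀ w ∈ Set.Icc vlow vhigh, HasDerivAt (F k) (f k w) w)
    (c c' β β' : ℝ → ℝ)
    (hc : ∀ z, HasDerivAt c (c' z) z)
    (hβd : ∀ w ∈ Set.Icc vlow vhigh, HasDerivAt β (β' w) w)
    (hODE : ∀ w ∈ Set.Icc vlow vhigh,
      c' (β w) * β' w = w * ∑ k ∈ Finset.Icc 1 I, (f k w - f (k - 1) w) * M k)
    (G : ℝ → ℝ) (hG : ∀ w, G w = ∑ k ∈ Finset.Icc 1 I, (F k w - F (k - 1) w) * M k)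
    (hGmono : MonotoneOn G (Set.Icc vlow vhigh))
    (U : ℝ → ℝ → ℝ) (hU : ∀ v w, U v w = v * G w - c (β w)) :
    ∀ v ∈ Set.Icc vlow vhigh, ∀ w ∈ Set.Icc vlow vhigh, U v w ≤ U v v := by
  intro v hv w hw
  set g : ℝ → ℝ := fun x => ∑ k ∈ Finset.Icc 1 I, (f k x - f (k - 1) x) * M k
  have hGd : ∀ x ∈ Icc vlow vhigh, HasDerivAt G (g x) x := by
    intro x hx
    rw [funext hG]
    refine hasDerivAt_sum_Icc_sub_mul M fun k hk => ?_
    rcases Nat.eq_zero_or_pos k with rfl | hk0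
    · simpa only [funext hF0, hf0] using hasDerivAt_const x (0 : ℝ)
    · exact hFderiv k (Finset.mem_Icc.mpr ⟨hk0, hk⟩) x hx
  have hUd : ∀ x ∈ Icc vlow vhigh, HasDerivAt (U v) ((v - x) * g x) x := by
    intro x hx
    have h : HasDerivAt (fun y => v * G y - c (β y)) (v * g x - c' (β x) * β' x) x :=
      ((hGd x hx).const_mul v).sub ((hc (β x)).comp x (hβd x hx))
    rwa [hODE x hx, ← sub_mul, ← funext (hU v)] at h
  have hg : ∀ x ∈ Ioo vlow vhigh, 0 ≤ g x := fun x hx =>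
    (hGd x (Ioo_subset_Icc_self hx)).nonneg_of_monotoneOn_of_mem_nhds hGmono
      (Icc_mem_nhds hx.1 hx.2)
  refine isMaxOn_Icc_of_hasDerivAt_sign hv
    (fun x hx => (hUd x hx).continuousAt.continuousWithinAt)
    (fun x hx => hUd x (Ioo_subset_Icc_self hx)) (fun x hx => ?_) (fun x hx => ?_) hw
  · exact mul_nonneg (sub_nonneg.mpr hx.2.le) (hg x ⟨hx.1, hx.2.trans_le hv.2⟩)
  · exact mul_nonpos_of_nonpos_of_nonneg (sub_nonpos.mpr hx.1.le)
      (hg x ⟨hv.1.trans_lt hx.1, hx.2⟩)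

/-- Incentive compatibility of the symmetric equilibrium of the all-pay auction: if the
strictly increasing bid function `β` satisfies the equilibrium ODE
`c'(β(w)) β'(w) = w Σ_{k=1}^I (f_{k:I-1}(w) - f_{k-1:I-1}(w)) M_k` with `β(vlow) = 0`, and
`G(w) = Σ_k (F_{k:I-1}(w) - F_{k-1:I-1}(w)) M_k` is nondecreasing, then a bidder of type `v`
bidding `β(w)` gets `U(v,w) = v G(w) - c(β(w))`, and truth-telling is optimal:
`U(v,w) ≤ U(v,v)` for all `v, w ∈ [vlow, vhigh]`. -/
theorem stmt12 (I : ℕ) (hI : 2 ≤ I) (vlow vhigh : ℝ) (hv : vlow < vhigh)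
    (M : ℕ → ℝ) (hM : ∀ k ∈ Finset.Icc 1 (I - 1), M (k + 1) ≤ M k) (hMnn : ∀ k, 0 ≤ M k)
    (F f : ℕ → ℝ → ℝ) (hF0 : ∀ v, F 0 v = 0) (hf0 : ∀ v, f 0 v = 0)
    (hFderiv : ∀ k ∈ Finset.Icc 1 I, ∀ w ∈ Set.Icc vlow vhigh, HasDerivAt (F k) (f k w) w)
    (hfc : ∀ k ∈ Finset.Icc 1 I, ContinuousOn (f k) (Set.Icc vlow vhigh))
    (c c' β β' : ℝ → ℝ)
    (hc : ∀ z, HasDerivAt c (c' z) z) (hc'c : Continuous c')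
    (hβmono : StrictMonoOn β (Set.Icc vlow vhigh))
    (hβd : ∀ w ∈ Set.Icc vlow vhigh, HasDerivAt β (β' w) w)
    (hβ'c : ContinuousOn β' (Set.Icc vlow vhigh))
    (hODE : ∀ w ∈ Set.Icc vlow vhigh,
      c' (β w) * β' w = w * ∑ k ∈ Finset.Icc 1 I, (f k w - f (k - 1) w) * M k)
    (hβ0 : β vlow = 0)
    (G : ℝ → ℝ) (hG : ∀ w, G w = ∑ k ∈ Finset.Icc 1 I, (F k w - F (k - 1) w) * M k)
    (hGmono : MonotoneOn G (Set.Icc vlow vhigh))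
    (U : ℝ → ℝ → ℝ) (hU : ∀ v w, U v w = v * G w - c (β w)) :
    ∀ v ∈ Set.Icc vlow vhigh, ∀ w ∈ Set.Icc vlow vhigh, U v w ≤ U v v :=
  stmt12_general I vlow vhigh M F f hF0 hf0 hFderiv c c' β β' hc hβd hODE G hG hGmono U hU
end
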